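/- For the scaling field X₂ = 2t∂_t + x∂_x + y∂_y + z∂_z - u∂_u - v∂_v - 2w∂_w and Y(g) as defined, [X₂, Y(g)] = Y(2tg' - g). -/

import Mathlib

set_option maxHeartbeats 1000000


/-- Coordinates on ℝ⁷: indices 0..6 ↦ (t,x,y,z,u,v,w). -/
abbrev R7 := Fin 7 → ℝ

/-- Lie bracket of vector fields on ℝ⁷ (in coefficient form). -/
noncomputable def lieBracket (V W : R7 → R7) : R7 → R7 :=
  fun p => fderiv ℝ W p (V p) - fderiv ℝ V p (W p)

/-- X₂ = 2t∂_t + x∂_x + y∂_y + z∂_z - u∂_u - v∂_v - 2w∂_w. -/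
noncomputable def X₂ : R7 → R7 :=
  fun p => ![2 * p 0, p 1, p 2, p 3, -p 4, -p 5, -2 * p 6]

/-- Y(g) = g(t)∂_x - (x/2)[g'(t)(v∂_u - u∂_v) + g''(t)∂_w]. -/
noncomputable def Yfield (g : ℝ → ℝ) : R7 → R7 :=
  fun p => ![0, g (p 0), 0, 0,
    -(p 1 / 2) * deriv g (p 0) * p 5,
    (p 1 / 2) * deriv g (p 0) * p 4,
    -(p 1 / 2) * deriv (deriv g) (p 0)]


private lemma vec7_eval {α : Type*} (a0 a1 a2 a3 a4 a5 a6 : α) :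
    ![a0,a1,a2,a3,a4,a5,a6] (0 : Fin 7) = a0 ∧ ![a0,a1,a2,a3,a4,a5,a6] (1 : Fin 7) = a1 ∧
    ![a0,a1,a2,a3,a4,a5,a6] (2 : Fin 7) = a2 ∧ ![a0,a1,a2,a3,a4,a5,a6] (3 : Fin 7) = a3 ∧
    ![a0,a1,a2,a3,a4,a5,a6] (4 : Fin 7) = a4 ∧ ![a0,a1,a2,a3,a4,a5,a6] (5 : Fin 7) = a5 ∧
    ![a0,a1,a2,a3,a4,a5,a6] (6 : Fin 7) = a6 :=
  ⟨rfl, rfl, rfl, rfl, rfl, rfl, rfl⟩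

private lemma vec7_5 {α : Type*} (a0 a1 a2 a3 a4 a5 a6 : α) :
    ![a0,a1,a2,a3,a4,a5,a6] (5 : Fin 7) = a5 := rfl

private lemma vec7_6 {α : Type*} (a0 a1 a2 a3 a4 a5 a6 : α) :
    ![a0,a1,a2,a3,a4,a5,a6] (6 : Fin 7) = a6 := rfl

private lemma vec7_4 {α : Type*} (a0 a1 a2 a3 a4 a5 a6 : α) :
    ![a0,a1,a2,a3,a4,a5,a6] (4 : Fin 7) = a4 := rfl

open ContinuousLinearMap in
/-- [X₂, Y(g)] = Y(2tg' - g). -/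
theorem stmt_7 (g : ℝ → ℝ) (hg : ContDiff ℝ (⊤ : ℕ∞) g) :
    lieBracket X₂ (Yfield g) = Yfield (fun t => 2 * t * deriv g t - g t) := by
  have hg0 : ContDiff ℝ (↑(⊤ : ℕ∞)) g := hg.of_le (by simp)
  have hgd : Differentiable ℝ g := hg0.differentiable (by simp)
  have hg1 : ContDiff ℝ (↑(⊤ : ℕ∞)) (deriv g) := (contDiff_infty_iff_deriv.mp hg0).2
  have hg1d : Differentiable ℝ (deriv g) := hg1.differentiable (by simp)
  have hg2 : ContDiff ℝ (↑(⊤ : ℕ∞)) (deriv (deriv g)) := (contDiff_infty_iff_deriv.mp hg1).2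
  have hg2d : Differentiable ℝ (deriv (deriv g)) := hg2.differentiable (by simp)
  -- derivative of the new coefficient function
  have hG1 : deriv (fun t => 2 * t * deriv g t - g t)
      = fun t => deriv g t + 2 * t * deriv (deriv g) t := by
    funext t
    have h : HasDerivAt (fun t => 2 * t * deriv g t - g t)
        ((2 * deriv g t + 2 * t * deriv (deriv g) t) - deriv g t) t := by
      have := (((hasDerivAt_id t).const_mul 2).mul (hg1d t).hasDerivAt).sub (hgd t).hasDerivAt
      exact this.congr_deriv (by simp only [id, mul_one])
    rw [h.deriv]; ring
  have hG2 : deriv (fun t => deriv g t + 2 * t * deriv (deriv g) t)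
      = fun t => 3 * deriv (deriv g) t + 2 * t * deriv (deriv (deriv g)) t := by
    funext t
    have h : HasDerivAt (fun t => deriv g t + 2 * t * deriv (deriv g) t)
        (deriv (deriv g) t + (2 * deriv (deriv g) t + 2 * t * deriv (deriv (deriv g)) t)) t := by
      have := (hg1d t).hasDerivAt.add (((hasDerivAt_id t).const_mul 2).mul (hg2d t).hasDerivAt)
      exact this.congr_deriv (by simp only [id, mul_one])
    rw [h.deriv]; ring
  funext p
  have hc : ∀ i : Fin 7, HasFDerivAt (fun q : R7 => q i) (proj i : R7 →L[ℝ] ℝ) p :=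
    by intro i; exact hasFDerivAt_apply i p
  have hgc : HasFDerivAt (fun q : R7 => g (q 0)) (deriv g (p 0) • proj (0 : Fin 7)) p :=
    (hgd (p 0)).hasDerivAt.comp_hasFDerivAt p (hc 0)
  have hg1c : HasFDerivAt (fun q : R7 => deriv g (q 0))
      (deriv (deriv g) (p 0) • proj (0 : Fin 7) : R7 →L[ℝ] ℝ) p := by
    have h := (hg1d (p 0)).hasDerivAt.comp_hasFDerivAt p (hc 0); exact h
  have hg2c : HasFDerivAt (fun q : R7 => deriv (deriv g) (q 0))
      (deriv (deriv (deriv g)) (p 0) • proj (0 : Fin 7) : R7 →L[ℝ] ℝ) p := by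
    have h := (hg2d (p 0)).hasDerivAt.comp_hasFDerivAt p (hc 0); exact h
  -- explicit derivatives of the components of Yfield g
  have H4 : HasFDerivAt (fun q : R7 => -(q 1 / 2) * deriv g (q 0) * q 5)
      ((-(2⁻¹ * deriv g (p 0) * p 5)) • proj (1 : Fin 7)
        + (-(p 1 / 2 * deriv (deriv g) (p 0) * p 5)) • proj (0 : Fin 7)
        + (-(p 1 / 2 * deriv g (p 0))) • proj (5 : Fin 7) : R7 →L[ℝ] ℝ) p := by
    have he : (fun q : R7 => -(q 1 / 2) * deriv g (q 0) * q 5)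
        = fun q : R7 => (-(q 1 * 2⁻¹)) * deriv g (q 0) * q 5 := by
      funext q; ring
    rw [he]
    have h := ((((hc 1).mul_const' (2⁻¹ : ℝ)).neg.mul hg1c).mul (hc 5))
    refine h.congr_fderiv ?_
    ext v
    simp
    ring
  have H5 : HasFDerivAt (fun q : R7 => (q 1 / 2) * deriv g (q 0) * q 4)
      ((2⁻¹ * deriv g (p 0) * p 4) • proj (1 : Fin 7)
        + (p 1 / 2 * deriv (deriv g) (p 0) * p 4) • proj (0 : Fin 7)
        + (p 1 / 2 * deriv g (p 0)) • proj (4 : Fin 7) : R7 →L[ℝ] ℝ) p := by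
    have he : (fun q : R7 => (q 1 / 2) * deriv g (q 0) * q 4)
        = fun q : R7 => (q 1 * 2⁻¹) * deriv g (q 0) * q 4 := by
      funext q; ring
    rw [he]
    have h := ((((hc 1).mul_const' (2⁻¹ : ℝ)).mul hg1c).mul (hc 4))
    refine h.congr_fderiv ?_
    ext v
    simp
    ring
  have H6 : HasFDerivAt (fun q : R7 => -(q 1 / 2) * deriv (deriv g) (q 0))
      ((-(2⁻¹ * deriv (deriv g) (p 0))) • proj (1 : Fin 7)
        + (-(p 1 / 2 * deriv (deriv (deriv g)) (p 0))) • proj (0 : Fin 7) : R7 →L[ℝ] ℝ) p := by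
    have he : (fun q : R7 => -(q 1 / 2) * deriv (deriv g) (q 0))
        = fun q : R7 => (-(q 1 * 2⁻¹)) * deriv (deriv g) (q 0) := by
      funext q; ring
    rw [he]
    have h := (((hc 1).mul_const' (2⁻¹ : ℝ)).neg.mul hg2c)
    refine h.congr_fderiv ?_
    ext v
    simp
    ring
  -- full derivatives of the two fields
  have hY : HasFDerivAt (Yfield g)
      (ContinuousLinearMap.pi
        (![0, deriv g (p 0) • proj (0 : Fin 7), 0, 0,
          (-(2⁻¹ * deriv g (p 0) * p 5)) • proj (1 : Fin 7)
            + (-(p 1 / 2 * deriv (deriv g) (p 0) * p 5)) • proj (0 : Fin 7)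
            + (-(p 1 / 2 * deriv g (p 0))) • proj (5 : Fin 7),
          (2⁻¹ * deriv g (p 0) * p 4) • proj (1 : Fin 7)
            + (p 1 / 2 * deriv (deriv g) (p 0) * p 4) • proj (0 : Fin 7)
            + (p 1 / 2 * deriv g (p 0)) • proj (4 : Fin 7),
          (-(2⁻¹ * deriv (deriv g) (p 0))) • proj (1 : Fin 7)
            + (-(p 1 / 2 * deriv (deriv (deriv g)) (p 0))) • proj (0 : Fin 7)]
          : Fin 7 → (R7 →L[ℝ] ℝ))) p := by
    apply hasFDerivAt_pi.2
    intro i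
    fin_cases i <;>
      simp only [Yfield, Matrix.cons_val_zero, Matrix.cons_val_one, Matrix.head_cons,
        Matrix.cons_val_two, Matrix.tail_cons, Matrix.cons_val_three, Matrix.cons_val_four,
        Fin.isValue, Matrix.cons_val_succ]
    · exact hasFDerivAt_const 0 p
    · exact hgc
    · exact hasFDerivAt_const 0 p
    · exact hasFDerivAt_const 0 p
    · exact H4
    · exact H5
    · exact H6
  have hX : HasFDerivAt X₂
      (ContinuousLinearMap.pi
        (![(2 : ℝ) • proj (0 : Fin 7), proj (1 : Fin 7), proj (2 : Fin 7), proj (3 : Fin 7),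
          -proj (4 : Fin 7), -proj (5 : Fin 7), (-2 : ℝ) • proj (6 : Fin 7)]
          : Fin 7 → (R7 →L[ℝ] ℝ))) p := by
    apply hasFDerivAt_pi.2
    intro i
    fin_cases i <;>
      simp only [X₂, Matrix.cons_val_zero, Matrix.cons_val_one, Matrix.head_cons,
        Matrix.cons_val_two, Matrix.tail_cons, Matrix.cons_val_three, Matrix.cons_val_four,
        Fin.isValue, Matrix.cons_val_succ]
    · exact (hc 0).const_mul 2
    · exact hc 1
    · exact hc 2
    · exact hc 3
    · exact (hc 4).neg
    · exact (hc 5).neg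
    · exact (hc 6).const_mul (-2)
  show fderiv ℝ (Yfield g) p (X₂ p) - fderiv ℝ X₂ p (Yfield g p) = _
  rw [hY.fderiv, hX.fderiv]
  funext i
  fin_cases i <;>
    simp [X₂, Yfield, hG1, hG2, ContinuousLinearMap.pi_apply, Matrix.cons_val_zero,
      Matrix.cons_val_one, Matrix.head_cons, Matrix.cons_val_succ, vec7_4, vec7_5, vec7_6, Pi.sub_apply] <;>
    ring
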